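/- Let 0 < C_∞ < C_0 and τ ≥ 1. Then for every λ > 0, λ/(C_0 + λτ) - ln(λ/(C_0 + λτ)) > λ/(C_∞ + λτ) - ln(λ/(C_∞ + λτ)). That is, with τ ≥ 1 the fully under-parameterized limiting BFE is always below the fully over-parameterized one, so weak descent never occurs. -/

import Mathlib

open Real

lemma sub_log_strictAntiOn : StrictAntiOn (fun x : ℝ => x - log x) (Set.Ioc 0 1) := by
  rintro a ⟨ha, -⟩ b ⟨hb, hb1⟩ hab
  -- `log a - log b = log (a / b) < a / b - 1 = (a - b) / b ≤ a - b`, as `a - b < 0` and `b ≤ 1`.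
  have hlog : log (a / b) < a / b - 1 :=
    log_lt_sub_one_of_pos (div_pos ha hb) ((div_lt_one hb).2 hab).ne
  have hratio : a / b - 1 ≤ a - b := by
    rw [div_sub_one hb.ne', div_le_iff₀ hb]
    nlinarith
  rw [log_div ha.ne' hb.ne'] at hlog
  show b - log b < a - log a
  linarith

lemma div_add_mul_mem_Ioc {C τ l : ℝ} (hC : 0 < C) (hτ : 1 ≤ τ) (hl : 0 < l) :
    l / (C + l * τ) ∈ Set.Ioc 0 1 := by
  have hden : l < C + l * τ := by nlinarith
  exact ⟨by positivity, ((div_lt_one (by linarith)).2 hden).le⟩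

/-- For `0 < C_∞ < C_0` and `τ ≥ 1`, for every `λ > 0` the over-parameterized
limiting BFE term exceeds the under-parameterized one:
`λ/(C₀ + λτ) - log (λ/(C₀ + λτ)) > λ/(C∞ + λτ) - log (λ/(C∞ + λτ))`,
so weak descent never occurs. -/
theorem no_weak_descent_large_tau (C0 Cinf τ : ℝ) (hCinf : 0 < Cinf)
    (hlt : Cinf < C0) (hτ : 1 ≤ τ) :
    ∀ l : ℝ, 0 < l →
      l / (Cinf + l * τ) - Real.log (l / (Cinf + l * τ)) <
        l / (C0 + l * τ) - Real.log (l / (C0 + l * τ)) := by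
  intro l hl
  have hCinf_mem := div_add_mul_mem_Ioc hCinf hτ hl
  have hC0_mem := div_add_mul_mem_Ioc (hCinf.trans hlt) hτ hl
  have hlt_ratio : l / (C0 + l * τ) < l / (Cinf + l * τ) :=
    div_lt_div_of_pos_left hl (by nlinarith) (by linarith)
  exact sub_log_strictAntiOn hC0_mem hCinf_mem hlt_ratio
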